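/- With I₁ = xz − y²/2 − x³/3 and I₂ = x²/2 − z, the cross product ∇I₁ × ∇I₂ equals (y, z, xy) at every point of R^3. -/

import Mathlib

/-- Partial derivative in direction `i` of a scalar function on ℝ³. -/
noncomputable def pd (i : Fin 3) (f : (Fin 3 → ℝ) → ℝ) (x : Fin 3 → ℝ) : ℝ :=
  fderiv ℝ f x (Pi.single i 1)

/-- Divergence of a vector field on ℝ³. -/
noncomputable def vdiv (v : (Fin 3 → ℝ) → Fin 3 → ℝ) (x : Fin 3 → ℝ) : ℝ :=
  pd 0 (fun y => v y 0) x + pd 1 (fun y => v y 1) x + pd 2 (fun y => v y 2) x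

/-- Curl of a vector field on ℝ³. -/
noncomputable def curl (A : (Fin 3 → ℝ) → Fin 3 → ℝ) (x : Fin 3 → ℝ) : Fin 3 → ℝ :=
  ![pd 1 (fun y => A y 2) x - pd 2 (fun y => A y 1) x,
    pd 2 (fun y => A y 0) x - pd 0 (fun y => A y 2) x,
    pd 0 (fun y => A y 1) x - pd 1 (fun y => A y 0) x]

/-- Gradient of a scalar function on ℝ³. -/
noncomputable def grad (f : (Fin 3 → ℝ) → ℝ) (x : Fin 3 → ℝ) : Fin 3 → ℝ :=
  ![pd 0 f x, pd 1 f x, pd 2 f x]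

/-- Cross product in ℝ³. -/
def cross (u v : Fin 3 → ℝ) : Fin 3 → ℝ :=
  ![u 1 * v 2 - u 2 * v 1, u 2 * v 0 - u 0 * v 2, u 0 * v 1 - u 1 * v 0]

/-- Euclidean dot product in ℝ³. -/
def dot (u v : Fin 3 → ℝ) : ℝ := u 0 * v 0 + u 1 * v 1 + u 2 * v 2

def P (i : Fin 3) : (Fin 3 → ℝ) →L[ℝ] ℝ := ContinuousLinearMap.proj i

lemma pd_eq {f : (Fin 3 → ℝ) → ℝ} {x : Fin 3 → ℝ} {L : (Fin 3 → ℝ) →L[ℝ] ℝ}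
    (h : HasFDerivAt f L x) (i : Fin 3) : pd i f x = L (Pi.single i 1) := by
  rw [pd, h.fderiv]

lemma hP (i : Fin 3) (x : Fin 3 → ℝ) : HasFDerivAt (fun p : Fin 3 → ℝ => p i) (P i) x :=
  hasFDerivAt_apply i x

lemma hI1 (x : Fin 3 → ℝ) :
    HasFDerivAt (fun p : Fin 3 → ℝ => p 0 * p 2 - (p 1)^2 / 2 - (p 0)^3 / 3)
      ((x 0 • P 2 + x 2 • P 0) - x 1 • P 1 - (x 0)^2 • P 0) x := by
  have heq : (fun p : Fin 3 → ℝ => p 0 * p 2 - (p 1)^2 / 2 - (p 0)^3 / 3)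
      = fun p : Fin 3 → ℝ =>
        p 0 * p 2 - (1/2 : ℝ) * (p 1 * p 1) - (1/3 : ℝ) * (p 0 * (p 0 * p 0)) := by
    funext p; ring
  rw [heq]
  have := (((hP 0 x).mul (hP 2 x)).sub (((hP 1 x).mul (hP 1 x)).const_mul (1/2 : ℝ))).sub
    (((hP 0 x).mul ((hP 0 x).mul (hP 0 x))).const_mul (1/3 : ℝ))
  refine this.congr_fderiv ?_
  ext v
  simp [P]
  ring

lemma hI2 (x : Fin 3 → ℝ) :
    HasFDerivAt (fun p : Fin 3 → ℝ => (p 0)^2 / 2 - p 2) (x 0 • P 0 - P 2) x := by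
  have heq : (fun p : Fin 3 → ℝ => (p 0)^2 / 2 - p 2)
      = fun p : Fin 3 → ℝ => (1/2 : ℝ) * (p 0 * p 0) - p 2 := by funext p; ring
  rw [heq]
  have := (((hP 0 x).mul (hP 0 x)).const_mul (1/2 : ℝ)).sub (hP 2 x)
  refine this.congr_fderiv ?_
  ext v
  simp [P]
  ring

lemma Papp (i j : Fin 3) : P i (Pi.single j 1) = if i = j then 1 else 0 := by
  simp [P, Pi.single_apply]

theorem nambu_form :
    ∀ x : Fin 3 → ℝ,
      cross (grad (fun p => p 0 * p 2 - (p 1)^2 / 2 - (p 0)^3 / 3) x)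
            (grad (fun p => (p 0)^2 / 2 - p 2) x) = ![x 1, x 2, x 0 * x 1] := by
  intro x
  have g1 : grad (fun p => p 0 * p 2 - (p 1)^2 / 2 - (p 0)^3 / 3) x
      = ![x 2 - (x 0)^2, -x 1, x 0] := by
    funext i
    fin_cases i <;>
      simp [grad, pd_eq (hI1 x), Papp, ContinuousLinearMap.sub_apply,
        ContinuousLinearMap.add_apply, ContinuousLinearMap.smul_apply]
  have g2 : grad (fun p => (p 0)^2 / 2 - p 2) x = ![x 0, 0, -1] := by
    funext i
    fin_cases i <;>
      simp [grad, pd_eq (hI2 x), Papp, ContinuousLinearMap.sub_apply,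
        ContinuousLinearMap.smul_apply]
  rw [g1, g2]
  funext i
  fin_cases i <;> simp [cross] <;> ring
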